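/- arXiv:2002.09028 — 2 statements merged into one kernel-verified Lean document; each statement's English description precedes it below -/
import Mathlib

section
/- Let Ĝ be a finite simple graph, K ⊆ V(Ĝ), O = V(Ĝ) ∖ K, r ≥ 1 and m ≥ 1 natural numbers, and set σ = m·(2r+1). Let G' be obtained from Ĝ by attaching to every vertex v ∈ O a pendant path of σ−1 new vertices. Then the maximum size of a 2r-independent set of G' (a set whose distinct members admit no walk of length at most 2r between them in G') equals m·|O| plus the maximum size of a set I ⊆ K that is 2r-independent in Ĝ. -/
/-!
A vertex of the new graph lies on the pendant path of a vertex `proj x` of `Ĝ`, at distance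
`pos x` from it. Walks of `G'` project to walks of `Ĝ` that are no longer, and the height
`pos x + 1` on a fixed pendant path (`0` off it) is `1`-Lipschitz. Hence a `2r`-independent set
meets each pendant path, of `σ` vertices, in at most `m` vertices, and its part outside the paths
is `2r`-independent in `Ĝ`. Conversely, the vertices at positions `2r, 2r + (2r+1), …` on every
pendant path can be added to any `2r`-independent `I ⊆ K`.
-/

/-- Graph obtained from `G` by adding new vertices `B` and, for each `p : P`, a fresh
path of length `len p` from `src p` to `dst p`: the path has `len p - 1` new internal
vertices (the pairs `⟨p, i⟩`); a connection of length `1` is just an edge. -/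
def SimpleGraph.addPaths {V : Type*} (G : SimpleGraph V) (B P : Type*)
    (src dst : P → V ⊕ B) (len : P → ℕ) :
    SimpleGraph ((V ⊕ B) ⊕ (Σ p : P, Fin (len p - 1))) :=
  SimpleGraph.fromRel (fun x y =>
    (∃ u w, G.Adj u w ∧ x = .inl (.inl u) ∧ y = .inl (.inl w)) ∨
    (∃ p : P, len p = 1 ∧ x = .inl (src p) ∧ y = .inl (dst p)) ∨
    (∃ p : P, ∃ i : Fin (len p - 1), (i : ℕ) = 0 ∧ x = .inl (src p) ∧ y = .inr ⟨p, i⟩) ∨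
    (∃ p : P, ∃ i j : Fin (len p - 1), (i : ℕ) + 1 = (j : ℕ) ∧ x = .inr ⟨p, i⟩ ∧ y = .inr ⟨p, j⟩) ∨
    (∃ p : P, ∃ i : Fin (len p - 1), (i : ℕ) + 2 = len p ∧ x = .inr ⟨p, i⟩ ∧ y = .inl (dst p)))

/-- Graph obtained from `G` by attaching to every vertex `v` of `O` a pendant path of
`ℓ` new vertices: a path of length `ℓ` from `v` to a fresh end-vertex (`B = ↥O`),
with `ℓ - 1` fresh internal vertices. -/
def SimpleGraph.attachPendants {V : Type*} [Fintype V] [DecidableEq V]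
    (G : SimpleGraph V) (O : Finset V) (ℓ : ℕ) :
    SimpleGraph ((V ⊕ {o : V // o ∈ O}) ⊕ (Σ _p : {o : V // o ∈ O}, Fin (ℓ - 1))) :=
  G.addPaths {o : V // o ∈ O} {o : V // o ∈ O} (fun o => .inl o.1) (fun o => .inr o)
    (fun _ => ℓ)

lemma Nat.le_add_of_div_eq_div {a b d : ℕ} (h : a / (d + 1) = b / (d + 1)) : b ≤ a + d := by
  have ha := Nat.div_mul_le_self a (d + 1)
  have hb := Nat.lt_div_mul_add (a := b) (b := d + 1) (by omega)
  rw [← h] at hb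
  omega

lemma Nat.mul_add_lt_mul_of_lt {k k' d : ℕ} (h : k < k') : k * (d + 1) + d < k' * (d + 1) := by
  have := Nat.mul_le_mul_right (d + 1) (Nat.succ_le_of_lt h)
  rw [Nat.succ_mul] at this
  omega

lemma Nat.sSup_eq_add_sSup {S T : Set ℕ} {c : ℕ} (hT : T.Nonempty) (hTb : BddAbove T)
    (hle : ∀ a ∈ S, ∃ b ∈ T, a ≤ c + b) (hmem : ∀ b ∈ T, c + b ∈ S) :
    sSup S = c + sSup T := by
  refine IsGreatest.csSup_eq ⟨hmem _ (Nat.sSup_mem hT hTb), fun a ha => ?_⟩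
  obtain ⟨b, hb, hab⟩ := hle a ha
  exact hab.trans (Nat.add_le_add_left (le_csSup hTb hb) c)

namespace SimpleGraph

variable {V W : Type*}

def IsDistIndepSet (G : SimpleGraph V) (d : ℕ) (I : Set V) : Prop :=
  ∀ u ∈ I, ∀ w ∈ I, u ≠ w → ¬ ∃ p : G.Walk u w, p.length ≤ d

lemma IsDistIndepSet.mono {G : SimpleGraph V} {d : ℕ} {I J : Set V}
    (hI : G.IsDistIndepSet d I) (hJI : J ⊆ I) : G.IsDistIndepSet d J :=
  fun u hu w hw => hI u (hJI hu) w (hJI hw)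

lemma IsDistIndepSet.comap {G : SimpleGraph V} {H : SimpleGraph W} {d : ℕ} {I : Set W}
    (hI : H.IsDistIndepSet d I) (f : G →g H) (hf : Function.Injective f) :
    G.IsDistIndepSet d (f ⁻¹' I) := by
  rintro u hu w hw huw ⟨p, hp⟩
  exact hI _ hu _ hw (hf.ne huw) ⟨p.map f, (p.length_map f).trans_le hp⟩

lemma Walk.le_add_length_of_adj {G : SimpleGraph V} {f : V → ℕ}
    (hf : ∀ x y, G.Adj x y → f x ≤ f y + 1) {u w : V} (p : G.Walk u w) :
    f u ≤ f w + p.length := by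
  induction p with
  | nil => simp
  | cons h _ ih => grind [Walk.length_cons, hf _ _ h]

lemma Walk.exists_walk_length_le_of_adj {G : SimpleGraph V} {H : SimpleGraph W} {f : V → W}
    (hf : ∀ x y, G.Adj x y → f x = f y ∨ H.Adj (f x) (f y)) {u w : V} (p : G.Walk u w) :
    ∃ q : H.Walk (f u) (f w), q.length ≤ p.length := by
  induction p with
  | nil => exact ⟨.nil, le_rfl⟩
  | cons h _ ih =>
    obtain ⟨q, hq⟩ := ih
    rcases hf _ _ h with heq | hadj
    · rw [heq]
      exact ⟨q, hq.trans (by simp)⟩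
    · exact ⟨q.cons hadj, by simpa using hq⟩

end SimpleGraph

namespace SimpleGraph.attachPendants

abbrev Vert (V : Type*) (O : Finset V) (ℓ : ℕ) : Type _ :=
  (V ⊕ {o : V // o ∈ O}) ⊕ (Σ _p : {o : V // o ∈ O}, Fin (ℓ - 1))

variable {V : Type*} {O : Finset V} {ℓ : ℕ}

def proj : Vert V O ℓ → V
  | .inl (.inl v) => v
  | .inl (.inr o) => o
  | .inr ⟨o, _⟩ => o

def pos : Vert V O ℓ → ℕ
  | .inl (.inl _) => 0
  | .inl (.inr _) => ℓ
  | .inr ⟨_, i⟩ => i + 1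

def base (v : V) : Vert V O ℓ := .inl (.inl v)

def pathVert (o : {o : V // o ∈ O}) (k : ℕ) : Vert V O ℓ :=
  if hk : k = 0 then base o
  else if h : k < ℓ then .inr ⟨o, k - 1, by omega⟩
  else .inl (.inr o)

@[simp] lemma proj_base (v : V) : proj (base v : Vert V O ℓ) = v := rfl

lemma pos_le (x : Vert V O ℓ) : pos x ≤ ℓ := by
  rcases x with (_ | _) | ⟨_, i⟩ <;> simp only [pos] <;> omega

@[simp] lemma proj_pathVert (o : {o : V // o ∈ O}) (k : ℕ) :
    proj (pathVert o k : Vert V O ℓ) = o := by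
  unfold pathVert; split_ifs <;> rfl

lemma pos_pathVert (o : {o : V // o ∈ O}) {k : ℕ} (hk : k ≤ ℓ) :
    pos (pathVert o k : Vert V O ℓ) = k := by
  unfold pathVert; split_ifs <;> simp only [pos, base] <;> omega

lemma eq_pathVert (hℓ : 1 ≤ ℓ) {x : Vert V O ℓ} {o : {o : V // o ∈ O}} (hx : proj x = o) :
    x = pathVert o (pos x) := by
  rcases x with (v | p) | ⟨p, i⟩
  · obtain rfl : v = o := hx
    rfl
  · obtain rfl : p = o := Subtype.ext hx
    show _ = pathVert p ℓ
    rw [pathVert, dif_neg (by omega), dif_neg (lt_irrefl ℓ)]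
  · obtain rfl : p = o := Subtype.ext hx
    show _ = pathVert p (i + 1)
    rw [pathVert, dif_neg (by omega), dif_pos (by omega)]
    rfl

lemma eq_base_of_proj_notMem {x : Vert V O ℓ} (hx : proj x ∉ O) : x = base (proj x) := by
  rcases x with (v | p) | ⟨p, i⟩
  · rfl
  · exact absurd p.2 hx
  · exact absurd p.2 hx

lemma base_injective : Function.Injective (base : V → Vert V O ℓ) :=
  fun _ _ h => Sum.inl_injective (Sum.inl_injective h)

section Marks

variable {m d : ℕ}

variable (O ℓ m d) in
def marks : Set (Vert V O ℓ) :=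
  Set.range fun p : {o : V // o ∈ O} × Fin m => pathVert p.1 (d + p.2 * (d + 1))

lemma pos_mark (hσ : ℓ + 1 = m * (d + 1)) (o : {o : V // o ∈ O}) (k : Fin m) :
    pos (pathVert o (d + k * (d + 1)) : Vert V O ℓ) = d + k * (d + 1) := by
  refine pos_pathVert o ?_
  have := Nat.mul_add_lt_mul_of_lt k.2 (d := d)
  omega

lemma ncard_marks (hσ : ℓ + 1 = m * (d + 1)) : (marks O ℓ m d).ncard = m * O.card := by
  rw [marks, Set.ncard_range_of_injective, Nat.card_prod, Nat.card_eq_fintype_card,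
    Fintype.card_coe, Nat.card_fin, Nat.mul_comm]
  rintro ⟨o, k⟩ ⟨o', k'⟩ h
  dsimp only at h
  have ho : o = o' := Subtype.ext (by simpa using congrArg proj h)
  have hk := congrArg pos h
  rw [pos_mark hσ, pos_mark hσ] at hk
  have hk' : (k : ℕ) = k' := Nat.eq_of_mul_eq_mul_right (by omega : 0 < d + 1) (by omega)
  exact Prod.ext ho (Fin.ext hk')

lemma ncard_image_base_union_marks [Finite V] (hσ : ℓ + 1 = m * (d + 1)) {I : Set V}
    (hIO : Disjoint I O) :
    (base '' I ∪ marks O ℓ m d).ncard = m * O.card + I.ncard := by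
  have hdisj : Disjoint (base '' I) (marks O ℓ m d) := by
    rw [Set.disjoint_left]
    rintro _ ⟨v, hv, rfl⟩ ⟨⟨o, k⟩, h⟩
    exact hIO.ne_of_mem hv o.2 (by simpa using (congrArg proj h).symm)
  rw [Set.ncard_union_eq hdisj, Set.ncard_image_of_injective _ base_injective, ncard_marks hσ,
    Nat.add_comm]

end Marks

variable [Fintype V] [DecidableEq V] {G : SimpleGraph V}

lemma proj_pos_of_adj {x y : Vert V O ℓ} (h : (G.attachPendants O ℓ).Adj x y) :
    (proj x = proj y ∧ (pos x + 1 = pos y ∨ pos y + 1 = pos x)) ∨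
      (G.Adj (proj x) (proj y) ∧ pos x = 0 ∧ pos y = 0) := by
  simp only [SimpleGraph.attachPendants, SimpleGraph.addPaths, SimpleGraph.fromRel_adj] at h
  obtain ⟨-, h | h⟩ := h <;>
    rcases h with ⟨u, w, hadj, rfl, rfl⟩ | ⟨p, hp, rfl, rfl⟩ | ⟨p, i, hi, rfl, rfl⟩ |
      ⟨p, i, j, hij, rfl, rfl⟩ | ⟨p, i, hi, rfl, rfl⟩ <;>
    simp_all [proj, pos, G.adj_comm]

lemma adj_pathVert (o : {o : V // o ∈ O}) {k : ℕ} (hk : k + 1 ≤ ℓ) :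
    (G.attachPendants O ℓ).Adj (pathVert o k) (pathVert o (k + 1)) := by
  have hne : (pathVert o k : Vert V O ℓ) ≠ pathVert o (k + 1) := fun h => by
    simpa [pos_pathVert o (by omega : k ≤ ℓ), pos_pathVert o hk] using congrArg pos h
  refine (SimpleGraph.fromRel_adj _ _ _).2 ⟨hne, Or.inl ?_⟩
  unfold pathVert
  split_ifs <;> simp [base] <;> omega

lemma exists_walk_pathVert (o : {o : V // o ∈ O}) {k j : ℕ} (h : k + j ≤ ℓ) :
    ∃ p : (G.attachPendants O ℓ).Walk (pathVert o k) (pathVert o (k + j)), p.length = j := by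
  induction j with
  | zero => exact ⟨.nil, rfl⟩
  | succ j ih =>
    obtain ⟨p, hp⟩ := ih (by omega)
    exact ⟨p.concat (adj_pathVert o (by omega)), by simp [hp]⟩

lemma exists_walk_of_proj_eq (hℓ : 1 ≤ ℓ) {x y : Vert V O ℓ} {o : {o : V // o ∈ O}}
    (hx : proj x = o) (hy : proj y = o) (hxy : pos x ≤ pos y) :
    ∃ p : (G.attachPendants O ℓ).Walk x y, p.length = pos y - pos x := by
  have hyℓ := pos_le y
  obtain ⟨p, hp⟩ :=
    exists_walk_pathVert (G := G) (ℓ := ℓ) o (k := pos x) (j := pos y - pos x) (by omega)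
  have hend : pathVert o (pos x + (pos y - pos x)) = y := by
    rw [Nat.add_sub_cancel' hxy, ← eq_pathVert hℓ hy]
  exact ⟨p.copy (eq_pathVert hℓ hx).symm hend, by simpa using hp⟩

def baseHom (G : SimpleGraph V) (O : Finset V) (ℓ : ℕ) : G →g G.attachPendants O ℓ where
  toFun := base
  map_rel' {u w} h := (SimpleGraph.fromRel_adj _ _ _).2
    ⟨by simpa [base] using h.ne, Or.inl (Or.inl ⟨u, w, h, rfl, rfl⟩)⟩

lemma exists_walk_proj {x y : Vert V O ℓ} (p : (G.attachPendants O ℓ).Walk x y) :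
    ∃ q : G.Walk (proj x) (proj y), q.length ≤ p.length :=
  p.exists_walk_length_le_of_adj fun _ _ h =>
    (proj_pos_of_adj h).imp And.left And.left

def height (v : V) (x : Vert V O ℓ) : ℕ := if proj x = v then pos x + 1 else 0

lemma height_le_height_add_one (v : V) {x y : Vert V O ℓ}
    (h : (G.attachPendants O ℓ).Adj x y) : height v x ≤ height v y + 1 := by
  unfold height
  rcases proj_pos_of_adj h with ⟨hxy, hpos⟩ | ⟨-, hx, hy⟩
  · rw [hxy]; split_ifs <;> omega
  · split_ifs <;> omega

lemma proj_eq_of_walk {x y : Vert V O ℓ} (p : (G.attachPendants O ℓ).Walk x y)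
    (hp : p.length ≤ pos x) :
    proj y = proj x ∧ pos x ≤ pos y + p.length ∧ pos y ≤ pos x + p.length := by
  have hxy := p.le_add_length_of_adj fun _ _ => height_le_height_add_one (proj x)
  have hyx := p.reverse.le_add_length_of_adj fun _ _ => height_le_height_add_one (proj x)
  simp only [height, Walk.length_reverse, if_true] at hxy hyx
  split_ifs at hxy hyx with hy
  · exact ⟨hy, by omega, by omega⟩
  · omega

section Upper

variable {m d : ℕ} {I : Set (Vert V O ℓ)}

lemma pos_add_lt_of_isDistIndepSet (hℓ : 1 ≤ ℓ)
    (hI : (G.attachPendants O ℓ).IsDistIndepSet d I) {x y : Vert V O ℓ} (hx : x ∈ I)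
    (hy : y ∈ I) {o : {o : V // o ∈ O}} (hxo : proj x = o) (hyo : proj y = o)
    (hxy : pos x < pos y) : pos x + d < pos y := by
  obtain ⟨p, hp⟩ := exists_walk_of_proj_eq (G := G) hℓ hxo hyo hxy.le
  by_contra! h
  exact hI x hx y hy (by rintro rfl; exact hxy.false) ⟨p, by omega⟩

/-- Points of a pendant path that are more than `d` apart lie in distinct blocks of `d + 1`
consecutive positions, and the path has `m` such blocks. -/
lemma ncard_inter_preimage_proj_le (hℓ : 1 ≤ ℓ) (hσ : ℓ + 1 = m * (d + 1))
    (hI : (G.attachPendants O ℓ).IsDistIndepSet d I) :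
    (I ∩ proj ⁻¹' O).ncard ≤ m * O.card := by
  have hblock : ∀ x ∈ I ∩ proj ⁻¹' O, ∀ y ∈ I ∩ proj ⁻¹' O, proj x = proj y →
      pos x / (d + 1) = pos y / (d + 1) → pos x ≤ pos y := by
    rintro x ⟨hx, hxO⟩ y ⟨hy, -⟩ hxy hdiv
    by_contra! hlt
    have := pos_add_lt_of_isDistIndepSet hℓ hI hy hx (o := ⟨_, hxO⟩) hxy.symm rfl hlt
    have := Nat.le_add_of_div_eq_div hdiv.symm
    omega
  have hmaps : ∀ x ∈ I ∩ proj ⁻¹' O, (proj x, pos x / (d + 1)) ∈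
      ((O ×ˢ Finset.range m : Finset (V × ℕ)) : Set (V × ℕ)) := by
    rintro x ⟨-, hxO⟩
    have := pos_le x
    simp only [Finset.coe_product, Set.mem_prod, Finset.mem_coe, Finset.mem_range]
    exact ⟨hxO, (Nat.div_lt_iff_lt_mul (by omega)).2 (by omega)⟩
  calc (I ∩ proj ⁻¹' O).ncard
      ≤ ((O ×ˢ Finset.range m : Finset (V × ℕ)) : Set (V × ℕ)).ncard := by
        refine Set.ncard_le_ncard_of_injOn _ hmaps fun x hx y hy hxy => ?_
        obtain ⟨hproj, hdiv⟩ := Prod.ext_iff.1 hxy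
        have hpos :=
          le_antisymm (hblock x hx y hy hproj hdiv) (hblock y hy x hx hproj.symm hdiv.symm)
        rw [eq_pathVert (o := ⟨_, hx.2⟩) hℓ rfl, eq_pathVert (o := ⟨_, hx.2⟩) hℓ hproj.symm,
          hpos]
    _ = m * O.card := by simp [Nat.mul_comm]

lemma ncard_le_of_isDistIndepSet (hℓ : 1 ≤ ℓ) (hσ : ℓ + 1 = m * (d + 1))
    (hI : (G.attachPendants O ℓ).IsDistIndepSet d I) :
    I.ncard ≤ m * O.card + (base ⁻¹' I \ O).ncard := by
  have hbase : ∀ x ∈ I \ proj ⁻¹' O, x = base (proj x) :=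
    fun x hx => eq_base_of_proj_notMem hx.2
  calc I.ncard = (I ∩ proj ⁻¹' O ∪ I \ proj ⁻¹' O).ncard := by rw [Set.inter_union_sdiff]
    _ ≤ (I ∩ proj ⁻¹' O).ncard + (I \ proj ⁻¹' O).ncard := Set.ncard_union_le _ _
    _ ≤ m * O.card + (base ⁻¹' I \ O).ncard := by
      refine add_le_add (ncard_inter_preimage_proj_le hℓ hσ hI)
        (Set.ncard_le_ncard_of_injOn proj (fun x hx => ⟨?_, hx.2⟩) fun x hx y hy hxy => ?_)
      · rw [Set.mem_preimage, ← hbase x hx]; exact hx.1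
      · rw [hbase x hx, hbase y hy, hxy]

end Upper

section Lower

variable {m d : ℕ}

lemma not_exists_walk_of_mem_marks (hσ : ℓ + 1 = m * (d + 1)) {I : Set V}
    (hIO : Disjoint I O) {x y : Vert V O ℓ} (hx : x ∈ marks O ℓ m d)
    (hy : y ∈ base '' I ∪ marks O ℓ m d) (hxy : x ≠ y) :
    ¬ ∃ p : (G.attachPendants O ℓ).Walk x y, p.length ≤ d := by
  rintro ⟨p, hp⟩
  obtain ⟨⟨o, k⟩, rfl⟩ := hx
  obtain ⟨hproj, hle, hge⟩ := proj_eq_of_walk p (by rw [pos_mark hσ]; omega)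
  rcases hy with ⟨v, hv, rfl⟩ | ⟨⟨o', k'⟩, rfl⟩
  · exact hIO.ne_of_mem hv o.2 (by simpa using hproj)
  · dsimp only at hproj hle hge hxy
    obtain rfl : o' = o := Subtype.ext (by simpa using hproj)
    have hk : (k : ℕ) ≠ k' := fun h => hxy (by rw [Fin.ext h])
    rw [pos_mark hσ, pos_mark hσ] at hle hge
    rcases Nat.lt_or_gt_of_ne hk with h | h <;>
      have := Nat.mul_add_lt_mul_of_lt h (d := d) <;> omega

lemma isDistIndepSet_image_base_union_marks (hσ : ℓ + 1 = m * (d + 1)) {I : Set V}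
    (hIO : Disjoint I O) (hI : G.IsDistIndepSet d I) :
    (G.attachPendants O ℓ).IsDistIndepSet d (base '' I ∪ marks O ℓ m d) := by
  intro x hx y hy hxy
  by_cases hxm : x ∈ marks O ℓ m d
  · exact not_exists_walk_of_mem_marks hσ hIO hxm hy hxy
  by_cases hym : y ∈ marks O ℓ m d
  · rintro ⟨p, hp⟩
    exact not_exists_walk_of_mem_marks hσ hIO hym hx hxy.symm ⟨p.reverse, by simpa using hp⟩
  obtain ⟨u, hu, rfl⟩ := hx.resolve_right hxm
  obtain ⟨w, hw, rfl⟩ := hy.resolve_right hym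
  rintro ⟨p, hp⟩
  obtain ⟨q, hq⟩ := exists_walk_proj p
  exact hI u hu w hw (by rintro rfl; exact hxy rfl) ⟨q, hq.trans hp⟩

end Lower

end SimpleGraph.attachPendants

open SimpleGraph attachPendants

/-- Let `σ = m·(2r+1)` and let `G'` be obtained from `Ĝ` by attaching
to every vertex of `O = V(Ĝ) ∖ K` a pendant path of `σ − 1` new vertices.  Then the
maximum size of a `2r`-independent set of `G'` equals `m·|O|` plus the maximum size of
a `2r`-independent set of `Ĝ` contained in `K`. -/
theorem independence_multikernel_paths {V : Type*} [Fintype V] [DecidableEq V]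
    (Ghat : SimpleGraph V) (K : Finset V) (r m : ℕ) (hr : 1 ≤ r) (hm : 1 ≤ m) :
    sSup {n : ℕ |
        ∃ I' : Set ((V ⊕ {o : V // o ∈ Kᶜ}) ⊕
            (Σ _p : {o : V // o ∈ Kᶜ}, Fin (m * (2 * r + 1) - 1 - 1))),
          (∀ u ∈ I', ∀ w ∈ I', u ≠ w →
            ¬ ∃ p : (Ghat.attachPendants Kᶜ (m * (2 * r + 1) - 1)).Walk u w,
                p.length ≤ 2 * r) ∧ I'.ncard = n}
      = m * Kᶜ.card +
        sSup {n : ℕ | ∃ I : Set V, I ⊆ (K : Set V) ∧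
          (∀ u ∈ I, ∀ w ∈ I, u ≠ w → ¬ ∃ p : Ghat.Walk u w, p.length ≤ 2 * r) ∧
          I.ncard = n} := by
  have h3 : 1 * 3 ≤ m * (2 * r + 1) := Nat.mul_le_mul hm (by omega)
  have hℓ : 1 ≤ m * (2 * r + 1) - 1 := by omega
  have hσ : m * (2 * r + 1) - 1 + 1 = m * (2 * r + 1) := by omega
  have hdisj {I : Set V} (hIK : I ⊆ K) : Disjoint I (Kᶜ : Finset V) := by
    rw [Finset.coe_compl]
    exact Set.disjoint_compl_right_iff_subset.2 hIK
  refine Nat.sSup_eq_add_sSup ⟨0, ∅, by simp, by simp, by simp⟩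
    ⟨Nat.card V, by rintro _ ⟨I, -, -, rfl⟩; exact Set.ncard_le_card I⟩ ?_ ?_
  · rintro _ ⟨I', hI', rfl⟩
    refine ⟨_, ⟨base ⁻¹' I' \ ↑Kᶜ, fun v hv => by simpa using hv.2,
      (IsDistIndepSet.comap hI' (baseHom Ghat Kᶜ _) base_injective).mono Set.sdiff_subset, rfl⟩,
      ncard_le_of_isDistIndepSet hℓ hσ hI'⟩
  · rintro _ ⟨I, hIK, hI, rfl⟩
    exact ⟨_, isDistIndepSet_image_base_union_marks hσ (hdisj hIK) hI,
      ncard_image_base_union_marks hσ (hdisj hIK)⟩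
end

section
/- Let Ĝ be a finite simple graph, L ⊆ V(Ĝ), O = V(Ĝ) ∖ L, and r ≥ 1. Let T be the tree with vertices b₀, b₁, b₂, a₁, …, a₆ in which b₀ is connected to b₁ by a path of length r, b₁ is connected to b₂ by a path of length r, b₁ is connected to each of a₁, a₂, a₃ by a path of length r, and b₂ is connected to each of a₄, a₅, a₆ by a path of length r. Let G' be obtained from Ĝ by attaching to every vertex v ∈ O a fresh copy of T, identifying b₀ with v. Then the minimum size of an r-dominating set of G' equals 2·|O| plus the minimum size of a set D ⊆ V(Ĝ) with N^r_{Ĝ}[v] ∩ D ≠ ∅ for every v ∈ L. -/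
/- Statement 17: to every `o ∈ O = Lᶜ` we attach a fresh copy of the tree `T`,
identifying `b₀` with `o`.  Per copy, the designated tree nodes other than `b₀` are
indexed by `Fin 8`: `b₁ = 0`, `b₂ = 1`, `a₁, a₂, a₃ = 2, 3, 4`, `a₄, a₅, a₆ = 5, 6, 7`.
The copy of `T` consists of 8 paths of length `r`: `b₀–b₁`, `b₁–b₂`, `b₁–a₁`, `b₁–a₂`,
`b₁–a₃`, `b₂–a₄`, `b₂–a₅`, `b₂–a₆`; the path with index `p : Fin 8` ends at node `p`. -/

/-- Source of the `p`-th path of the tree-copy at `o`. -/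
def src17 {V : Type*} [Fintype V] [DecidableEq V] (L : Finset V)
    (q : {o : V // o ∈ Lᶜ} × Fin 8) : V ⊕ ({o : V // o ∈ Lᶜ} × Fin 8) :=
  if q.2.1 = 0 then .inl q.1.1            -- b₀–b₁ starts at b₀ = o
  else if q.2.1 ≤ 4 then .inr (q.1, 0)    -- b₁–b₂, b₁–a₁, b₁–a₂, b₁–a₃ start at b₁
  else .inr (q.1, 1)                      -- b₂–a₄, b₂–a₅, b₂–a₆ start at b₂

/-- Target of the `p`-th path of the tree-copy at `o`: node `p`. -/
def dst17 {V : Type*} [Fintype V] [DecidableEq V] (L : Finset V)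
    (q : {o : V // o ∈ Lᶜ} × Fin 8) : V ⊕ ({o : V // o ∈ Lᶜ} × Fin 8) :=
  .inr q

/-!
For the upper bound, an optimal set `D` dominating `L` in `Ĝ`, together with the nodes `b₁` and
`b₂` of every copy of `T`, is an `r`-dominating set of `G'`: every vertex of a copy lies within
`r` of `b₁` or `b₂`, and every `o ∈ O` lies at distance `r` from its `b₁`.

For the lower bound, the leaf `a₁` (resp. `a₄`) is within distance `r` only of the vertices
of its pendant path from `b₁` (resp. `b₂`), so an `r`-dominating set `D'` of `G'` meets the
`b₁`-side and the `b₂`-side of every copy. These vertices are farther than `r` from every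
vertex of `L`, so the other vertices of `D'` (those of `Ĝ` and of the `b₀`–`b₁` paths),
collapsed onto their roots in `Ĝ` (which does not lengthen walks), `r`-dominate `L` in `Ĝ`.
All lower bounds on distances come from potentials that change by at most one along every
edge.
-/

namespace SimpleGraph

variable {α β : Type*} {G : SimpleGraph α} {H : SimpleGraph β}

theorem Walk.apply_le_apply_add_length (f : α → ℤ)
    (hf : ∀ x y, G.Adj x y → |f x - f y| ≤ 1) {x y : α} (w : G.Walk x y) :
    f x ≤ f y + w.length := by
  induction w with
  | nil => simp
  | cons h _ ih =>
    have := (abs_le.mp (hf _ _ h)).2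
    push_cast [Walk.length_cons]
    linarith

theorem Walk.exists_walk_length_le_of_eq_or_adj (f : α → β)
    (hf : ∀ x y, G.Adj x y → f x = f y ∨ H.Adj (f x) (f y)) {x y : α} (w : G.Walk x y) :
    ∃ w' : H.Walk (f x) (f y), w'.length ≤ w.length := by
  induction w with
  | nil => exact ⟨.nil, le_rfl⟩
  | cons h _ ih =>
    obtain ⟨w', hw'⟩ := ih
    rcases hf _ _ h with he | ha
    · exact ⟨w'.copy he.symm rfl, by simp only [Walk.length_copy, Walk.length_cons]; omega⟩
    · exact ⟨.cons ha w', by simp only [Walk.length_cons]; omega⟩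

section addPaths

variable {V B P : Type*} {G : SimpleGraph V} {src dst : P → V ⊕ B} {len : P → ℕ}

local notation "G'" => G.addPaths B P src dst len

theorem addPaths_adj_induction {motive : (V ⊕ B) ⊕ (Σ p : P, Fin (len p - 1)) →
      (V ⊕ B) ⊕ (Σ p : P, Fin (len p - 1)) → Prop}
    (symm : ∀ x y, motive x y → motive y x)
    (base : ∀ u w, G.Adj u w → motive (.inl (.inl u)) (.inl (.inl w)))
    (edge : ∀ p, len p = 1 → motive (.inl (src p)) (.inl (dst p)))
    (first : ∀ p (i : Fin (len p - 1)), (i : ℕ) = 0 → motive (.inl (src p)) (.inr ⟨p, i⟩))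
    (step : ∀ p (i j : Fin (len p - 1)), (i : ℕ) + 1 = j →
      motive (.inr ⟨p, i⟩) (.inr ⟨p, j⟩))
    (last : ∀ p (i : Fin (len p - 1)), (i : ℕ) + 2 = len p →
      motive (.inr ⟨p, i⟩) (.inl (dst p)))
    {x y} (h : (G').Adj x y) : motive x y := by
  obtain ⟨-, h | h⟩ := (fromRel_adj _ _ _).mp h
  on_goal 2 => apply symm
  all_goals
    rcases h with ⟨u, w, huw, rfl, rfl⟩ | ⟨p, hp, rfl, rfl⟩ | ⟨p, i, hi, rfl, rfl⟩ |
      ⟨p, i, j, hij, rfl, rfl⟩ | ⟨p, i, hi, rfl, rfl⟩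
    exacts [base u w huw, edge p hp, first p i hi, step p i j hij, last p i hi]

def addPathsInlHom : G →g G' where
  toFun v := .inl (.inl v)
  map_rel' h := (fromRel_adj _ _ _).mpr ⟨by simp [h.ne], .inl (.inl ⟨_, _, h, rfl, rfl⟩)⟩

theorem addPaths_adj_src_dst {p : P} (hp : len p = 1) (hne : src p ≠ dst p) :
    (G').Adj (.inl (src p)) (.inl (dst p)) :=
  (fromRel_adj _ _ _).mpr ⟨by simpa using hne, .inl (.inr (.inl ⟨p, hp, rfl, rfl⟩))⟩

theorem addPaths_adj_src_inr {p : P} (i : Fin (len p - 1)) (hi : (i : ℕ) = 0) :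
    (G').Adj (.inl (src p)) (.inr ⟨p, i⟩) :=
  (fromRel_adj _ _ _).mpr ⟨by simp, .inl (.inr (.inr (.inl ⟨p, i, hi, rfl, rfl⟩)))⟩

theorem addPaths_adj_inr_inr {p : P} (i j : Fin (len p - 1)) (hij : (i : ℕ) + 1 = j) :
    (G').Adj (.inr ⟨p, i⟩) (.inr ⟨p, j⟩) :=
  (fromRel_adj _ _ _).mpr ⟨by simp [Fin.ext_iff]; omega,
    .inl (.inr (.inr (.inr (.inl ⟨p, i, j, hij, rfl, rfl⟩))))⟩

theorem addPaths_adj_inr_dst {p : P} (i : Fin (len p - 1)) (hi : (i : ℕ) + 2 = len p) :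
    (G').Adj (.inr ⟨p, i⟩) (.inl (dst p)) :=
  (fromRel_adj _ _ _).mpr ⟨by simp, .inl (.inr (.inr (.inr (.inr ⟨p, i, hi, rfl, rfl⟩))))⟩

theorem addPaths_exists_walk_src_inr (p : P) (i : Fin (len p - 1)) :
    ∃ w : (G').Walk (.inl (src p)) (.inr ⟨p, i⟩), w.length = i + 1 := by
  obtain ⟨n, hn⟩ := i
  induction n with
  | zero => exact ⟨.cons (addPaths_adj_src_inr _ rfl) .nil, rfl⟩
  | succ n ih =>
    obtain ⟨w, hw⟩ := ih (by omega)
    exact ⟨w.concat (addPaths_adj_inr_inr ⟨n, by omega⟩ _ rfl), by simp [hw]⟩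

theorem addPaths_exists_walk_inr_dst (p : P) (i : Fin (len p - 1)) :
    ∃ w : (G').Walk (.inr ⟨p, i⟩) (.inl (dst p)), w.length = len p - 1 - i := by
  obtain ⟨n, hn⟩ := i
  induction h : len p - 2 - n generalizing n with
  | zero =>
    refine ⟨.cons (addPaths_adj_inr_dst _ (show n + 2 = len p by omega)) .nil, ?_⟩
    simp only [Walk.length_cons, Walk.length_nil]; omega
  | succ k ih =>
    obtain ⟨w, hw⟩ := ih (n + 1) (by omega) (by omega)
    exact ⟨.cons (addPaths_adj_inr_inr _ ⟨n + 1, by omega⟩ rfl) w, by simp [hw]; omega⟩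

theorem addPaths_exists_walk_src_dst (p : P) (hp : 1 ≤ len p) (hne : src p ≠ dst p) :
    ∃ w : (G').Walk (.inl (src p)) (.inl (dst p)), w.length = len p := by
  rcases hp.eq_or_lt with hp | hp
  · exact ⟨.cons (addPaths_adj_src_dst hp.symm hne) .nil, by
      simp only [Walk.length_cons, Walk.length_nil]; omega⟩
  · have h0 : 0 < len p - 1 := by omega
    obtain ⟨w₁, hw₁⟩ := addPaths_exists_walk_src_inr (G := G) p ⟨0, h0⟩
    obtain ⟨w₂, hw₂⟩ := addPaths_exists_walk_inr_dst (G := G) p ⟨0, h0⟩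
    exact ⟨w₁.append w₂, by simp only [Walk.length_append, hw₁, hw₂]; omega⟩

open Classical in
/-- The distance to `dst q` when the path `q` is the only way into `dst q`, capped at
`len q + 1`. -/
noncomputable def addPathsPendantPotential (src dst : P → V ⊕ B) (len : P → ℕ) (q : P) :
    (V ⊕ B) ⊕ (Σ p : P, Fin (len p - 1)) → ℤ
  | .inl y => if y = dst q then 0 else if y = src q then len q else len q + 1
  | .inr ⟨p, i⟩ => if p = q then len q - 1 - i else len q + 1

theorem abs_addPathsPendantPotential_sub_le {q : P} (hdst : ∀ p, dst p = dst q → p = q)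
    (hsrc : ∀ p, src p ≠ dst q) (hV : ∀ v, dst q ≠ .inl v) {x y} (h : (G').Adj x y) :
    |addPathsPendantPotential src dst len q x -
      addPathsPendantPotential src dst len q y| ≤ 1 := by
  set f := addPathsPendantPotential src dst len q
  refine addPaths_adj_induction (motive := fun x y => |f x - f y| ≤ 1)
    (fun x y h => abs_sub_comm (f x) (f y) ▸ h) ?_ ?_ ?_ ?_ ?_ h
  · intro u w _
    simp only [f, addPathsPendantPotential, if_neg (hV u).symm, if_neg (hV w).symm]
    split_ifs <;> simp
  · intro p hp
    by_cases hpq : p = q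
    · subst hpq; simp [f, addPathsPendantPotential, hsrc, hp]
    · have : dst p ≠ dst q := fun h => hpq (hdst p h)
      simp only [f, addPathsPendantPotential, if_neg (hsrc p), if_neg this]
      split_ifs <;> simp
  · intro p i hi
    by_cases hpq : p = q
    · subst hpq; simp [f, addPathsPendantPotential, hsrc, hi]
    · simp only [f, addPathsPendantPotential, if_neg (hsrc p), if_neg hpq]
      split_ifs <;> simp
  · intro p i j hij
    simp only [f, addPathsPendantPotential]
    split_ifs <;> simp [abs_le]; omega
  · intro p i hi
    by_cases hpq : p = q
    · subst hpq
      simp [f, addPathsPendantPotential]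
      rw [abs_le]; omega
    · have : dst p ≠ dst q := fun h => hpq (hdst p h)
      simp only [f, addPathsPendantPotential, if_neg hpq, if_neg this]
      split_ifs <;> simp

theorem addPaths_eq_of_walk_to_pendant {q : P} (hdst : ∀ p, dst p = dst q → p = q)
    (hsrc : ∀ p, src p ≠ dst q) (hV : ∀ v, dst q ≠ .inl v) {x}
    (w : (G').Walk x (.inl (dst q))) (hw : w.length ≤ len q) :
    x = .inl (src q) ∨ x = .inl (dst q) ∨ ∃ i, x = .inr ⟨q, i⟩ := by
  have hx := w.apply_le_apply_add_length _
    (fun _ _ h => abs_addPathsPendantPotential_sub_le hdst hsrc hV h)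
  rcases x with y | ⟨p, i⟩
  · simp only [addPathsPendantPotential, if_true] at hx
    split_ifs at hx with h₁ h₂
    exacts [.inr (.inl (congrArg _ h₁)), .inl (congrArg _ h₂), by omega]
  · simp only [addPathsPendantPotential, if_true] at hx
    split_ifs at hx with h
    exacts [.inr (.inr ⟨h ▸ i, by subst h; rfl⟩), by omega]

end addPaths

end SimpleGraph

namespace MultikernelTree

open SimpleGraph

variable {V : Type*} [Fintype V] [DecidableEq V] {Ghat : SimpleGraph V} {L : Finset V} {r : ℕ}

local notation "O" => {o : V // o ∈ Lᶜ}
local notation "Vert" => (V ⊕ (O × Fin 8)) ⊕ (Σ _p : O × Fin 8, Fin (r - 1))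
local notation "G'" => Ghat.addPaths (O × Fin 8) (O × Fin 8) (src17 L) (dst17 L) (fun _ => r)

theorem src17_ne_dst17 (q : O × Fin 8) : src17 L q ≠ dst17 L q := by
  rcases q with ⟨o, j⟩
  dsimp only [src17, dst17]
  split_ifs <;> simp [Fin.ext_iff] <;> omega

theorem src17_ne_inr_of_two_le {o : O} {t : Fin 8} (ht : 2 ≤ t) (q : O × Fin 8) :
    src17 L q ≠ .inr (o, t) := by
  unfold src17
  split_ifs <;> simp [Fin.ext_iff] <;> omega

def treeRoot : Vert → V
  | .inl (.inl v) => v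
  | .inl (.inr q) => q.1
  | .inr ⟨q, _⟩ => q.1

theorem treeRoot_src17 (q : O × Fin 8) : treeRoot (r := r) (.inl (src17 L q)) = q.1 := by
  unfold src17
  split_ifs <;> rfl

theorem treeRoot_eq_or_adj {x y : Vert} (h : (G').Adj x y) :
    treeRoot x = treeRoot y ∨ Ghat.Adj (treeRoot x) (treeRoot y) := by
  refine addPaths_adj_induction (motive := fun x y => treeRoot x = treeRoot y ∨
    Ghat.Adj (treeRoot x) (treeRoot y)) (fun x y h => h.imp Eq.symm Adj.symm)
    (fun _ _ h => .inr h) (fun p _ => .inl (treeRoot_src17 p))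
    (fun p _ _ => .inl (treeRoot_src17 p))
    (fun _ _ _ _ => .inl rfl) (fun _ _ _ => .inl rfl) h

def nodeLevel (j : Fin 8) : ℤ := if (j : ℕ) = 0 then 1 else if (j : ℕ) ≤ 4 then 2 else 3

/-- The depth in the copy of `T` at `o`, and `-1` off it: leaving the copy through `o` costs a
step. -/
def treeDepth (o : O) : Vert → ℤ
  | .inl (.inl v) => if v = o then 0 else -1
  | .inl (.inr q) => if q.1 = o then r * nodeLevel q.2 else -1
  | .inr ⟨q, i⟩ => if q.1 = o then r * (nodeLevel q.2 - 1) + i + 1 else -1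

theorem abs_treeDepth_sub_le (o : O) {x y : Vert} (h : (G').Adj x y) :
    |treeDepth o x - treeDepth o y| ≤ 1 := by
  refine addPaths_adj_induction (motive := fun x y => |treeDepth o x - treeDepth o y| ≤ 1)
    (fun x y h => abs_sub_comm (treeDepth o x) _ ▸ h) ?_ ?_ ?_ ?_ ?_ h
  · intro u w _
    simp only [treeDepth]
    split_ifs <;> simp
  · rintro ⟨o', j⟩ (hr : r = 1)
    simp only [src17, dst17, treeDepth, nodeLevel, hr]
    split_ifs <;> simp_all
  · rintro ⟨o', j⟩ i (hi : (i : ℕ) = 0)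
    simp only [src17, treeDepth, nodeLevel, hi]
    split_ifs <;> simp_all
  · rintro ⟨o', j⟩ i i' (hi : (i : ℕ) + 1 = i')
    simp only [treeDepth]
    split_ifs <;> simp [abs_le]; omega
  · rintro ⟨o', j⟩ i (hi : (i : ℕ) + 2 = r)
    simp only [dst17, treeDepth, nodeLevel]
    split_ifs <;> simp [abs_le] <;> omega

def side (j : Fin 8) : Fin 2 := if j = 1 ∨ 5 ≤ j then 1 else 0

/-- `none` on `Ĝ` and on the interior of the `b₀`–`b₁` paths; on the rest of the copy at `o`,
`some (o, 0)` on the `b₁`-side and `some (o, 1)` on the `b₂`-side. -/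
def branch : Vert → Option (O × Fin 2)
  | .inl (.inl _) => none
  | .inl (.inr q) => some (q.1, side q.2)
  | .inr ⟨q, _⟩ => if q.2 = 0 then none else some (q.1, side q.2)

theorem branch_eq_none_of_walk {v : V} (hv : v ∈ L) {d : Vert}
    (w : (G').Walk d (.inl (.inl v))) (hw : w.length ≤ r) : branch d = none := by
  rcases d with (v' | ⟨o, j⟩) | ⟨⟨o, p⟩, i⟩
  · rfl
  · have hvo : v ≠ o := fun h => Finset.mem_compl.mp o.2 (h ▸ hv)
    have := w.apply_le_apply_add_length _ (fun _ _ => abs_treeDepth_sub_le o)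
    simp only [treeDepth, nodeLevel, if_pos, if_neg hvo] at this
    split_ifs at this <;> omega
  · have hvo : v ≠ o := fun h => Finset.mem_compl.mp o.2 (h ▸ hv)
    have := w.apply_le_apply_add_length _ (fun _ _ => abs_treeDepth_sub_le o)
    simp only [treeDepth, nodeLevel, if_pos, if_neg hvo] at this
    have hp : p = 0 := by
      split_ifs at this with h <;> first | exact Fin.ext h | omega
    simp [branch, hp]

theorem branch_eq_of_walk_to_leaf {o : O} {t : Fin 8} (ht : 2 ≤ t) {x : Vert}
    (w : (G').Walk x (.inl (.inr (o, t)))) (hw : w.length ≤ r) : branch x = some (o, side t) := by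
  have hne : t ≠ 0 := by rintro rfl; exact absurd ht (by decide)
  rcases addPaths_eq_of_walk_to_pendant (src := src17 L) (dst := dst17 L) (q := (o, t))
    (fun p h => (Sum.inr_injective h : p = (o, t))) (src17_ne_inr_of_two_le ht)
    (fun _ => Sum.inr_ne_inl) w hw with rfl | rfl | ⟨i, rfl⟩
  · revert ht
    unfold src17
    simp only [branch, side]
    split_ifs <;> intro <;> fin_cases t <;> simp_all
  · rfl
  · simp [branch, hne]

theorem exists_leaf_side (s : Fin 2) : ∃ t : Fin 8, 2 ≤ t ∧ side t = s := by
  fin_cases s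
  exacts [⟨2, by decide, rfl⟩, ⟨5, by decide, rfl⟩]

theorem exists_root_walk_of_dominating {D' : Set Vert}
    (hD' : ∀ x, ∃ d ∈ D', ∃ w : (G').Walk d x, w.length ≤ r) :
    ∀ v ∈ L, ∃ d ∈ treeRoot '' (D' ∩ {x | branch x = none}), ∃ w : Ghat.Walk d v,
      w.length ≤ r := by
  intro v hv
  obtain ⟨d, hd, w, hw⟩ := hD' (.inl (.inl v))
  obtain ⟨w', hw'⟩ :=
    w.exists_walk_length_le_of_eq_or_adj treeRoot fun _ _ => treeRoot_eq_or_adj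
  exact ⟨_, ⟨d, ⟨hd, branch_eq_none_of_walk hv w hw⟩, rfl⟩, w', hw'.trans hw⟩

theorem two_mul_card_le_ncard_of_dominating {D' : Set Vert}
    (hD' : ∀ x, ∃ d ∈ D', ∃ w : (G').Walk d x, w.length ≤ r) :
    2 * Lᶜ.card ≤ (D' \ {x | branch x = none}).ncard := by
  have hsurj : Set.range some ⊆ branch '' (D' \ {x | branch x = none}) := by
    rintro _ ⟨⟨o, s⟩, rfl⟩
    obtain ⟨t, ht, rfl⟩ := exists_leaf_side s
    obtain ⟨d, hd, w, hw⟩ := hD' (.inl (.inr (o, t)))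
    have hbranch := branch_eq_of_walk_to_leaf ht w hw
    exact ⟨d, ⟨hd, by simp [hbranch]⟩, hbranch⟩
  calc 2 * Lᶜ.card = (Set.range (some : O × Fin 2 → _)).ncard := by
        rw [Set.ncard_range_of_injective (Option.some_injective _), Nat.card_eq_fintype_card,
          Fintype.card_prod, Fintype.card_coe, Fintype.card_fin, mul_comm]
    _ ≤ (branch '' (D' \ {x | branch x = none})).ncard := Set.ncard_le_ncard hsurj
    _ ≤ _ := Set.ncard_image_le

/-- The nodes `b₁ = hub o 0` and `b₂ = hub o 1` of the copy at `o`. -/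
def hub (o : O) (s : Fin 2) : Vert := .inl (.inr (o, s.castLE (by decide)))

theorem exists_hub_eq_src17 {q : O × Fin 8} (hq : q.2 ≠ 0) :
    ∃ s, hub q.1 s = (.inl (src17 L q) : Vert) := by
  have hq' : (q.2 : ℕ) ≠ 0 := fun h => hq (Fin.ext h)
  simp only [src17, if_neg hq']
  split_ifs
  exacts [⟨0, rfl⟩, ⟨1, rfl⟩]

theorem exists_hub_walk_to_root (hr : 1 ≤ r) (o : O) :
    ∃ w : (G').Walk (hub o 0) (.inl (.inl o)), w.length ≤ r := by
  obtain ⟨w, hw⟩ :=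
    addPaths_exists_walk_src_dst (G := Ghat) (len := fun _ => r) (o, 0) hr (src17_ne_dst17 _)
  exact ⟨w.reverse.copy rfl (by simp [src17]),
    ((Walk.length_copy ..).trans ((Walk.length_reverse _).trans hw)).le⟩

theorem exists_hub_walk_to_node (hr : 1 ≤ r) (q : O × Fin 8) :
    ∃ s, ∃ w : (G').Walk (hub q.1 s) (.inl (.inr q)), w.length ≤ r := by
  by_cases hq : q.2 = 0 ∨ q.2 = 1
  · obtain ⟨o, j⟩ := q
    rcases hq with rfl | rfl
    exacts [⟨0, .nil, Nat.zero_le _⟩, ⟨1, .nil, Nat.zero_le _⟩]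
  · obtain ⟨s, hs⟩ := exists_hub_eq_src17 (L := L) (r := r) (not_or.mp hq).1
    obtain ⟨w, hw⟩ :=
      addPaths_exists_walk_src_dst (G := Ghat) (len := fun _ => r) q hr (src17_ne_dst17 _)
    exact ⟨s, w.copy hs.symm rfl, ((Walk.length_copy ..).trans hw).le⟩

theorem exists_hub_walk_to_inr (q : O × Fin 8) (i : Fin (r - 1)) :
    ∃ s, ∃ w : (G').Walk (hub q.1 s) (.inr ⟨q, i⟩), w.length ≤ r := by
  by_cases hq : q.2 = 0
  · obtain ⟨o, j⟩ := q
    obtain rfl : j = 0 := hq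
    obtain ⟨w, hw⟩ := addPaths_exists_walk_inr_dst (G := Ghat) (src := src17 L) (dst := dst17 L)
      (len := fun _ => r) (o, 0) i
    exact ⟨0, w.reverse.copy rfl rfl, (Walk.length_copy ..).trans_le <|
      (Walk.length_reverse _).trans_le (by omega)⟩
  · obtain ⟨s, hs⟩ := exists_hub_eq_src17 (L := L) (r := r) hq
    obtain ⟨w, hw⟩ := addPaths_exists_walk_src_inr (G := Ghat) (len := fun _ => r) q i
    exact ⟨s, w.copy hs.symm rfl, (Walk.length_copy ..).trans_le (by omega)⟩

theorem hub_injective : Function.Injective (fun q : O × Fin 2 => hub (r := r) q.1 q.2) := by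
  rintro ⟨o, s⟩ ⟨o', s'⟩ h
  simpa [hub] using h

theorem exists_dominating_of_dominates (hr : 1 ≤ r) {D : Set V}
    (hD : ∀ v ∈ L, ∃ d ∈ D, ∃ w : Ghat.Walk d v, w.length ≤ r) :
    ∃ D' : Set Vert, (∀ x, ∃ d ∈ D', ∃ w : (G').Walk d x, w.length ≤ r) ∧
      D'.ncard = 2 * Lᶜ.card + D.ncard := by
  refine ⟨Set.range (fun q : O × Fin 2 => hub q.1 q.2) ∪ (fun v => .inl (.inl v)) '' D,
    ?_, ?_⟩
  · rintro ((v | q) | ⟨q, i⟩)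
    · by_cases hv : v ∈ L
      · obtain ⟨d, hd, w, hw⟩ := hD v hv
        exact ⟨_, .inr ⟨d, hd, rfl⟩, w.map addPathsInlHom, (w.length_map _).trans_le hw⟩
      · obtain ⟨w, hw⟩ := exists_hub_walk_to_root hr ⟨v, Finset.mem_compl.mpr hv⟩
        exact ⟨_, .inl ⟨(_, 0), rfl⟩, w, hw⟩
    · obtain ⟨s, w, hw⟩ := exists_hub_walk_to_node hr q
      exact ⟨_, .inl ⟨(q.1, s), rfl⟩, w, hw⟩
    · obtain ⟨s, w, hw⟩ := exists_hub_walk_to_inr q i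
      exact ⟨_, .inl ⟨(q.1, s), rfl⟩, w, hw⟩
  · have hdisj : Disjoint (Set.range (fun q : O × Fin 2 => hub (r := r) q.1 q.2))
        ((fun v => .inl (.inl v)) '' D) := by
      rw [Set.disjoint_left]
      rintro _ ⟨q, rfl⟩ ⟨v, -, h⟩
      simp [hub] at h
    rw [Set.ncard_union_eq hdisj, Set.ncard_range_of_injective hub_injective,
      Set.ncard_image_of_injective D (fun _ _ h => by simpa using h),
      Nat.card_eq_fintype_card, Fintype.card_prod, Fintype.card_coe, Fintype.card_fin, mul_comm]

theorem ncard_add_le_ncard_of_dominating {D' : Set Vert}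
    (hD' : ∀ x, ∃ d ∈ D', ∃ w : (G').Walk d x, w.length ≤ r) :
    2 * Lᶜ.card + sInf {n | ∃ D : Set V,
      (∀ v ∈ L, ∃ d ∈ D, ∃ w : Ghat.Walk d v, w.length ≤ r) ∧ D.ncard = n} ≤
      D'.ncard := by
  rw [← Set.ncard_inter_add_ncard_sdiff_eq_ncard D' {x | branch x = none}, add_comm]
  gcongr
  · refine le_trans (Nat.sInf_le ?_) (Set.ncard_image_le (f := treeRoot))
    exact ⟨_, exists_root_walk_of_dominating hD', rfl⟩
  · exact two_mul_card_le_ncard_of_dominating hD'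

end MultikernelTree

/-- Let `G'` be obtained from `Ĝ` by attaching to every vertex of
`O = V(Ĝ) ∖ L` a fresh copy of the tree `T` (built from `b₀, b₁, b₂, a₁, …, a₆` by
paths of length `r` as described), identifying `b₀` with that vertex.  Then the
minimum size of an `r`-dominating set of `G'` equals `2·|O|` plus the minimum size of
a set `D ⊆ V(Ĝ)` that `r`-dominates `L` in `Ĝ`. -/
theorem domination_multikernel_trees {V : Type*} [Fintype V] [DecidableEq V]
    (Ghat : SimpleGraph V) (L : Finset V) (r : ℕ) (hr : 1 ≤ r) :
    sInf {n : ℕ |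
        ∃ D' : Set ((V ⊕ ({o : V // o ∈ Lᶜ} × Fin 8)) ⊕
            (Σ _p : {o : V // o ∈ Lᶜ} × Fin 8, Fin (r - 1))),
          (∀ x, ∃ d ∈ D',
            ∃ w : (Ghat.addPaths ({o : V // o ∈ Lᶜ} × Fin 8) ({o : V // o ∈ Lᶜ} × Fin 8)
                (src17 L) (dst17 L) (fun _ => r)).Walk d x, w.length ≤ r) ∧
          D'.ncard = n}
      = 2 * Lᶜ.card +
        sInf {n : ℕ | ∃ D : Set V,
          (∀ v ∈ L, ∃ d ∈ D, ∃ w : Ghat.Walk d v, w.length ≤ r) ∧ D.ncard = n} := by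
  apply le_antisymm
  · have hne : Set.Nonempty {n : ℕ | ∃ D : Set V,
        (∀ v ∈ L, ∃ d ∈ D, ∃ w : Ghat.Walk d v, w.length ≤ r) ∧ D.ncard = n} :=
      ⟨_, Set.univ, fun v _ => ⟨v, trivial, .nil, Nat.zero_le r⟩, rfl⟩
    obtain ⟨D, hD, hDcard⟩ := Nat.sInf_mem hne
    obtain ⟨D', hD', hD'card⟩ := MultikernelTree.exists_dominating_of_dominates hr hD
    exact Nat.sInf_le ⟨D', hD', hDcard ▸ hD'card⟩
  · refine le_csInf ⟨_, Set.univ, fun x => ⟨x, trivial, .nil, Nat.zero_le r⟩, rfl⟩ ?_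
    rintro _ ⟨D', hD', rfl⟩
    exact MultikernelTree.ncard_add_le_ncard_of_dominating hD'
end
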